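/- arXiv:0803.1147 — 6 statements merged into one kernel-verified Lean document; each statement's English description precedes it below -/
import Mathlib

section
/- Let S be a subset of ℝⁿ and x ∈ S. Every point derivation of R(S) at x extends to a unique point derivation of C^∞(S) at x; that is, for every point derivation w of R(S) at x there exists exactly one point derivation v of C^∞(S) at x with v(f) = w(f) for all f ∈ R(S). -/
noncomputable section

/-- `C^∞(S)`: the `ℝ`-algebra of functions `f : S → ℝ` that locally extend to smooth
functions on `ℝⁿ`. -/
def Csm (n : ℕ) (S : Set (Fin n → ℝ)) : Subalgebra ℝ (S → ℝ) where
  carrier := {f | ∀ x : S, ∃ U : Set (Fin n → ℝ), IsOpen U ∧ (x : Fin n → ℝ) ∈ U ∧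
      ∃ F : (Fin n → ℝ) → ℝ, ContDiff ℝ (⊤ : ℕ∞) F ∧ ∀ y : S, (y : Fin n → ℝ) ∈ U → f y = F y}
  mul_mem' := by
    intro f g hf hg x
    obtain ⟨U, hU, hxU, F, hF, hFf⟩ := hf x
    obtain ⟨V, hV, hxV, G, hG, hGg⟩ := hg x
    exact ⟨U ∩ V, hU.inter hV, ⟨hxU, hxV⟩, F * G, hF.mul hG,
      fun y hy => by simp [Pi.mul_apply, hFf y hy.1, hGg y hy.2]⟩
  add_mem' := by
    intro f g hf hg x
    obtain ⟨U, hU, hxU, F, hF, hFf⟩ := hf x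
    obtain ⟨V, hV, hxV, G, hG, hGg⟩ := hg x
    exact ⟨U ∩ V, hU.inter hV, ⟨hxU, hxV⟩, F + G, hF.add hG,
      fun y hy => by simp [Pi.add_apply, hFf y hy.1, hGg y hy.2]⟩
  one_mem' := by
    intro x
    exact ⟨Set.univ, isOpen_univ, trivial, 1, contDiff_const, fun y _ => rfl⟩
  zero_mem' := by
    intro x
    exact ⟨Set.univ, isOpen_univ, trivial, 0, contDiff_const, fun y _ => rfl⟩
  algebraMap_mem' := by
    intro r x
    exact ⟨Set.univ, isOpen_univ, trivial, fun _ => r, contDiff_const, fun y _ => rfl⟩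

/-- `R(S)`: the `ℝ`-algebra of restrictions to `S` of smooth functions on `ℝⁿ`. -/
def Rres (n : ℕ) (S : Set (Fin n → ℝ)) : Subalgebra ℝ (S → ℝ) where
  carrier := {f | ∃ F : (Fin n → ℝ) → ℝ, ContDiff ℝ (⊤ : ℕ∞) F ∧ ∀ y : S, f y = F y}
  mul_mem' := by
    rintro f g ⟨F, hF, hFf⟩ ⟨G, hG, hGg⟩
    exact ⟨F * G, hF.mul hG, fun y => by simp [Pi.mul_apply, hFf y, hGg y]⟩
  add_mem' := by
    rintro f g ⟨F, hF, hFf⟩ ⟨G, hG, hGg⟩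
    exact ⟨F + G, hF.add hG, fun y => by simp [Pi.add_apply, hFf y, hGg y]⟩
  one_mem' := ⟨1, contDiff_const, fun _ => rfl⟩
  zero_mem' := ⟨0, contDiff_const, fun _ => rfl⟩
  algebraMap_mem' := fun r => ⟨fun _ => r, contDiff_const, fun _ => rfl⟩

/-- `C^∞(ℝⁿ)`: the `ℝ`-algebra of smooth functions on `ℝⁿ`. -/
def CsmAll (n : ℕ) : Subalgebra ℝ ((Fin n → ℝ) → ℝ) where
  carrier := {F | ContDiff ℝ (⊤ : ℕ∞) F}
  mul_mem' := fun {F G} (hF : ContDiff ℝ (⊤ : ℕ∞) F) (hG : ContDiff ℝ (⊤ : ℕ∞) G) => hF.mul hG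
  add_mem' := fun {F G} (hF : ContDiff ℝ (⊤ : ℕ∞) F) (hG : ContDiff ℝ (⊤ : ℕ∞) G) => hF.add hG
  one_mem' := show ContDiff ℝ (⊤ : ℕ∞) (1 : (Fin n → ℝ) → ℝ) from contDiff_const
  zero_mem' := show ContDiff ℝ (⊤ : ℕ∞) (0 : (Fin n → ℝ) → ℝ) from contDiff_const
  algebraMap_mem' := fun r => show ContDiff ℝ (⊤ : ℕ∞) (fun _ => r) from contDiff_const

/-- A point derivation at `x` of an algebra `A` of real-valued functions on `X`. -/
def IsPtDeriv {X : Type*} (A : Subalgebra ℝ (X → ℝ)) (x : X) (v : A →ₗ[ℝ] ℝ) : Prop :=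
  ∀ f g : A, v (f * g) = v f * (g : X → ℝ) x + (f : X → ℝ) x * v g

/-- The tangent space `T_x S`: the vector space of point derivations of `C^∞(S)` at `x`. -/
def TangentAt (n : ℕ) (S : Set (Fin n → ℝ)) (x : S) :
    Submodule ℝ ((Csm n S) →ₗ[ℝ] ℝ) where
  carrier := {v | IsPtDeriv (Csm n S) x v}
  add_mem' := by
    intro v w hv hw f g
    simp only [LinearMap.add_apply, hv f g, hw f g]
    ring
  zero_mem' := by
    intro f g
    simp
  smul_mem' := by
    intro c v hv f g
    simp only [LinearMap.smul_apply, hv f g, smul_eq_mul]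
    ring

/-- A smooth map between subsets of Euclidean spaces: it locally extends to a smooth
map of the ambient Euclidean spaces. -/
def SmoothMapSub (n m : ℕ) (S : Set (Fin n → ℝ)) (T : Set (Fin m → ℝ)) (φ : S → T) : Prop :=
  ∀ x : S, ∃ U : Set (Fin n → ℝ), IsOpen U ∧ (x : Fin n → ℝ) ∈ U ∧
    ∃ Φ : (Fin n → ℝ) → (Fin m → ℝ), ContDiff ℝ (⊤ : ℕ∞) Φ ∧
      ∀ y : S, (y : Fin n → ℝ) ∈ U → ((φ y : Fin m → ℝ)) = Φ y

/-- Two subsets of Euclidean spaces are diffeomorphic: there is a smooth bijection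
with smooth inverse. -/
def DiffeoSubsets (n m : ℕ) (A : Set (Fin n → ℝ)) (B : Set (Fin m → ℝ)) : Prop :=
  ∃ (φ : A → B) (ψ : B → A), SmoothMapSub n m A B φ ∧ SmoothMapSub m n B A ψ ∧
    Function.LeftInverse ψ φ ∧ Function.RightInverse ψ φ

/-- The structural dimension of `S` at `x`: the smallest `m` such that some open
neighbourhood of `x` in `S` (subspace topology) is diffeomorphic to a subset of `ℝ^m`. -/
def structDimAt (n : ℕ) (S : Set (Fin n → ℝ)) (x : Fin n → ℝ) : ℕ :=
  sInf {m | ∃ U : Set (Fin n → ℝ), x ∈ U ∧ (∃ W, IsOpen W ∧ U = W ∩ S) ∧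
    ∃ V : Set (Fin m → ℝ), DiffeoSubsets n m U V}

/-- `x` is a structurally regular point of `S` if the structural dimension is constant
on some open neighbourhood of `x` in `S`. -/
def StructRegular (n : ℕ) (S : Set (Fin n → ℝ)) (x : Fin n → ℝ) : Prop :=
  ∃ W : Set (Fin n → ℝ), IsOpen W ∧ x ∈ W ∧
    ∀ y ∈ W ∩ S, structDimAt n S y = structDimAt n S x

/-- The restriction to `S` of the `i`-th coordinate function, as an element of `C^∞(S)`. -/
def coordFn (n : ℕ) (S : Set (Fin n → ℝ)) (i : Fin n) : Csm n S :=
  ⟨fun y => (y : Fin n → ℝ) i, fun _ => ⟨Set.univ, isOpen_univ, trivial, fun z => z i,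
    contDiff_pi.mp contDiff_id i, fun _ _ => rfl⟩⟩

/-- The restriction to `S` of a globally smooth function belongs to `C^∞(S)`. -/
theorem restrict_mem_Csm {n : ℕ} (S : Set (Fin n → ℝ)) {F : (Fin n → ℝ) → ℝ}
    (hF : ContDiff ℝ (⊤ : ℕ∞) F) : (fun y : S => F y) ∈ Csm n S :=
  fun _ => ⟨Set.univ, isOpen_univ, trivial, F, hF, fun _ _ => rfl⟩
/-- Locality: a point derivation kills functions vanishing near the point. -/
theorem ptDeriv_loc {n : ℕ} {S : Set (Fin n → ℝ)} (A : Subalgebra ℝ (S → ℝ))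
    (hA : ∀ F : (Fin n → ℝ) → ℝ, ContDiff ℝ (⊤ : ℕ∞) F → (fun y : S => F y) ∈ A)
    (x : S) (v : A →ₗ[ℝ] ℝ) (hv : IsPtDeriv A x v)
    (f : A) (U : Set (Fin n → ℝ)) (hUo : IsOpen U) (hUx : (x : Fin n → ℝ) ∈ U)
    (hf : ∀ y : S, (y : Fin n → ℝ) ∈ U → (f : S → ℝ) y = 0) : v f = 0 := by
  obtain ⟨χ, hsupp, -, hχsm, -, hχx⟩ := exists_contDiff_tsupport_subset (n := (⊤ : ℕ∞)) (hUo.mem_nhds hUx)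
  set g : A := ⟨fun y => χ y, hA χ hχsm⟩ with hg
  have hgf : g * f = 0 := by
    apply Subtype.ext
    funext y
    by_cases hy : (y : Fin n → ℝ) ∈ U
    · show (g : S → ℝ) y * (f : S → ℝ) y = 0
      rw [hf y hy, mul_zero]
    · have hz : χ y = 0 := image_eq_zero_of_notMem_tsupport (fun h => hy (hsupp h))
      show (g : S → ℝ) y * (f : S → ℝ) y = 0
      have : (g : S → ℝ) y = χ y := rfl
      rw [this, hz, zero_mul]
  have h := hv g f
  rw [hgf, map_zero] at h
  have hfx : (f : S → ℝ) x = 0 := hf x hUx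
  have hgx : (g : S → ℝ) x = 1 := hχx
  rw [hfx, hgx] at h
  linarith [h]

/-- Two elements of `R(S)` agreeing near `x` have the same derivative. -/
theorem w_eq_of_eqOn {n : ℕ} {S : Set (Fin n → ℝ)} (x : S)
    (w : Rres n S →ₗ[ℝ] ℝ) (hw : IsPtDeriv (Rres n S) x w)
    (g h : Rres n S) (U : Set (Fin n → ℝ)) (hUo : IsOpen U) (hUx : (x : Fin n → ℝ) ∈ U)
    (hgh : ∀ y : S, (y : Fin n → ℝ) ∈ U → (g : S → ℝ) y = (h : S → ℝ) y) : w g = w h := by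
  have hA : ∀ F : (Fin n → ℝ) → ℝ, ContDiff ℝ (⊤ : ℕ∞) F → (fun y : S => F y) ∈ Rres n S :=
    fun F hF => ⟨F, hF, fun _ => rfl⟩
  have h0 : w (g - h) = 0 := by
    apply ptDeriv_loc (Rres n S) hA x w hw (g - h) U hUo hUx
    intro y hy
    show (g : S → ℝ) y - (h : S → ℝ) y = 0
    rw [hgh y hy, sub_self]
  rw [map_sub] at h0
  linarith

/-- Every point derivation of `R(S)` at `x` extends to a unique point
derivation of `C^∞(S)` at `x`. -/
theorem ptDeriv_extend_unique {n : ℕ} (S : Set (Fin n → ℝ)) (x : S)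
    (w : Rres n S →ₗ[ℝ] ℝ) (hw : IsPtDeriv (Rres n S) x w) :
    ∃! v : Csm n S →ₗ[ℝ] ℝ, IsPtDeriv (Csm n S) x v ∧
      ∀ (f : S → ℝ) (hR : f ∈ Rres n S) (hC : f ∈ Csm n S), v ⟨f, hC⟩ = w ⟨f, hR⟩ := by
  classical
  have hch : ∀ f : Csm n S, ∃ U : Set (Fin n → ℝ), IsOpen U ∧ (x : Fin n → ℝ) ∈ U ∧
      ∃ F : (Fin n → ℝ) → ℝ, ContDiff ℝ (⊤ : ℕ∞) F ∧
        ∀ y : S, (y : Fin n → ℝ) ∈ U → (f : S → ℝ) y = F y := fun f => f.2 x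
  choose U hUo hUx F hFsm hFf using hch
  -- the chosen global representative in R(S)
  let E : Csm n S → Rres n S := fun f => ⟨fun y => F f y, F f, hFsm f, fun _ => rfl⟩
  have hE : ∀ (f : Csm n S) (y : S), (y : Fin n → ℝ) ∈ U f →
      ((E f : Rres n S) : S → ℝ) y = (f : S → ℝ) y := fun f y hy => (hFf f y hy).symm
  have hExx : ∀ f : Csm n S, ((E f : Rres n S) : S → ℝ) x = (f : S → ℝ) x :=
    fun f => hE f x (hUx f)
  -- well-definedness
  have key : ∀ (f : Csm n S) (g : Rres n S) (V : Set (Fin n → ℝ)), IsOpen V →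
      (x : Fin n → ℝ) ∈ V → (∀ y : S, (y : Fin n → ℝ) ∈ V → (f : S → ℝ) y = (g : S → ℝ) y) →
      w (E f) = w g := by
    intro f g V hVo hVx hfg
    apply w_eq_of_eqOn x w hw (E f) g (U f ∩ V) ((hUo f).inter hVo) ⟨hUx f, hVx⟩
    intro y hy
    rw [hE f y hy.1, hfg y hy.2]
  let v : Csm n S →ₗ[ℝ] ℝ :=
    { toFun := fun f => w (E f)
      map_add' := by
        intro f g
        rw [show w (E f) + w (E g) = w (E f + E g) by rw [map_add]]
        apply key (f + g) (E f + E g) (U (f + g) ∩ (U f ∩ U g))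
          ((hUo (f + g)).inter ((hUo f).inter (hUo g)))
          ⟨hUx (f + g), hUx f, hUx g⟩
        intro y hy
        show ((f + g : Csm n S) : S → ℝ) y = ((E f : Rres n S) : S → ℝ) y + ((E g : Rres n S) : S → ℝ) y
        rw [hE f y hy.2.1, hE g y hy.2.2]
        rfl
      map_smul' := by
        intro c f
        simp only [RingHom.id_apply, smul_eq_mul]
        rw [show c * w (E f) = w (c • E f) by rw [map_smul]; rfl]
        apply key (c • f) (c • E f) (U (c • f) ∩ U f)
          ((hUo (c • f)).inter (hUo f)) ⟨hUx (c • f), hUx f⟩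
        intro y hy
        show ((c • f : Csm n S) : S → ℝ) y = ((c • E f : Rres n S) : S → ℝ) y
        show c • (f : S → ℝ) y = c • ((E f : Rres n S) : S → ℝ) y
        rw [hE f y hy.2] }
  have hvd : IsPtDeriv (Csm n S) x v := by
    intro f g
    have h1 : v (f * g) = w (E f * E g) := by
      apply key (f * g) (E f * E g) (U f ∩ U g) ((hUo f).inter (hUo g)) ⟨hUx f, hUx g⟩
      intro y hy
      show ((f * g : Csm n S) : S → ℝ) y = ((E f * E g : Rres n S) : S → ℝ) y
      show (f : S → ℝ) y * (g : S → ℝ) y =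
        ((E f : Rres n S) : S → ℝ) y * ((E g : Rres n S) : S → ℝ) y
      rw [hE f y hy.1, hE g y hy.2]
    rw [h1, hw (E f) (E g), hExx f, hExx g]
    rfl
  have hvw : ∀ (f : S → ℝ) (hR : f ∈ Rres n S) (hC : f ∈ Csm n S),
      v ⟨f, hC⟩ = w ⟨f, hR⟩ := by
    intro f hR hC
    apply key ⟨f, hC⟩ ⟨f, hR⟩ Set.univ isOpen_univ trivial
    intro y _
    rfl
  refine ⟨v, ⟨hvd, hvw⟩, ?_⟩
  rintro v' ⟨hv'd, hv'w⟩
  ext f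
  -- v' f = v' (E f as Csm) since their difference vanishes near x
  have hEC : (fun y : S => F f y) ∈ Csm n S := restrict_mem_Csm S (hFsm f)
  have hdiff : v' (f - ⟨fun y : S => F f y, hEC⟩) = 0 := by
    apply ptDeriv_loc (Csm n S) (fun G hG => restrict_mem_Csm S hG) x v' hv'd _
      (U f) (hUo f) (hUx f)
    intro y hy
    show (f : S → ℝ) y - F f y = 0
    rw [hFf f y hy, sub_self]
  rw [map_sub] at hdiff
  have h2 : v' ⟨fun y : S => F f y, hEC⟩ = w (E f) :=
    hv'w (fun y : S => F f y) ⟨F f, hFsm f, fun _ => rfl⟩ hEC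
  have : v' f = w (E f) := by linarith
  rw [this]
  rfl
end
end

section
/- Let S be a subset of ℝⁿ, let x ∈ S, and let w be a point derivation of C^∞(ℝⁿ) at x. There exists a point derivation u of C^∞(S) at x satisfying u(F|_S) = w(F) for all smooth F : ℝⁿ → ℝ if and only if w annihilates N(S), i.e. w(F) = 0 for every F ∈ N(S). -/
noncomputable section

/-- A point derivation `w` of `C^∞(ℝⁿ)` at `x ∈ S` induces a point
derivation of `C^∞(S)` at `x` (via restriction) if and only if `w` annihilates the
ideal `N(S)` of smooth functions vanishing on `S`. -/
theorem ptDeriv_descends_iff_annihilates {n : ℕ} (S : Set (Fin n → ℝ)) (x : S)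
    (w : CsmAll n →ₗ[ℝ] ℝ) (hw : IsPtDeriv (CsmAll n) (x : Fin n → ℝ) w) :
    (∃ u : Csm n S →ₗ[ℝ] ℝ, IsPtDeriv (Csm n S) x u ∧
        ∀ (F : (Fin n → ℝ) → ℝ) (hF : ContDiff ℝ (⊤ : ℕ∞) F),
          u ⟨fun y : S => F y, restrict_mem_Csm S hF⟩ = w ⟨F, hF⟩) ↔
      ∀ (F : (Fin n → ℝ) → ℝ) (hF : ContDiff ℝ (⊤ : ℕ∞) F),
        (∀ y ∈ S, F y = 0) → w ⟨F, hF⟩ = 0 := by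
  constructor
  · rintro ⟨u, -, hcomp⟩ F hF hFS
    rw [← hcomp F hF]
    have : (⟨fun y : S => F y, restrict_mem_Csm S hF⟩ : Csm n S) = 0 := by
      ext y; exact hFS y y.2
    rw [this, map_zero]
  · intro hann
    -- Key locality lemma
    have key : ∀ (F G : (Fin n → ℝ) → ℝ) (hF : ContDiff ℝ (⊤ : ℕ∞) F)
        (hG : ContDiff ℝ (⊤ : ℕ∞) G) (W : Set (Fin n → ℝ)), IsOpen W → (x : Fin n → ℝ) ∈ W →
        (∀ y : S, (y : Fin n → ℝ) ∈ W → F y = G y) → w ⟨F, hF⟩ = w ⟨G, hG⟩ := by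
      intro F G hF hG W hWo hxW hagree
      obtain ⟨ε, hε, hball⟩ := Metric.isOpen_iff.mp hWo _ hxW
      set c : ContDiffBump (x : Fin n → ℝ) := ⟨ε/2, ε, by positivity, by linarith⟩
      have hχ : ContDiff ℝ (⊤ : ℕ∞) (c : (Fin n → ℝ) → ℝ) := c.contDiff
      have hχx : (c : (Fin n → ℝ) → ℝ) (x : Fin n → ℝ) = 1 :=
        c.one_of_mem_closedBall (by simp [c]; positivity)
      have hHS : ∀ y ∈ S, ((c : (Fin n → ℝ) → ℝ) * (F - G)) y = 0 := by
        intro y hy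
        by_cases hyW : y ∈ Metric.ball (x : Fin n → ℝ) ε
        · have := hagree ⟨y, hy⟩ (hball hyW)
          simp [Pi.mul_apply, Pi.sub_apply, this]
        · have : (c : (Fin n → ℝ) → ℝ) y = 0 :=
            c.zero_of_le_dist (by simpa [Metric.mem_ball, not_lt] using hyW)
          simp [Pi.mul_apply, this]
      have hsub : ContDiff ℝ (⊤ : ℕ∞) (F - G) := hF.sub hG
      have hzero := hann _ (hχ.mul hsub) hHS
      have hleib := hw ⟨_, hχ⟩ ⟨F - G, hsub⟩
      have hmul : (⟨_, hχ⟩ * ⟨F - G, hsub⟩ : CsmAll n) =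
          ⟨_, hχ.mul hsub⟩ := rfl
      rw [hmul, hzero] at hleib
      have hFGx : (F - G) (x : Fin n → ℝ) = 0 := by
        have := hagree x hxW; simp [Pi.sub_apply, this]
      have hval : ((⟨F - G, hsub⟩ : CsmAll n) : (Fin n → ℝ) → ℝ) (x : Fin n → ℝ) = 0 := hFGx
      have hχx' : ((⟨_, hχ⟩ : CsmAll n) : (Fin n → ℝ) → ℝ) (x : Fin n → ℝ) = 1 := hχx
      rw [hval, hχx'] at hleib
      have : w ⟨F - G, hsub⟩ = 0 := by linarith [hleib.symm]
      have hsplit : (⟨F - G, hsub⟩ : CsmAll n) = ⟨F, hF⟩ - ⟨G, hG⟩ := rfl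
      rw [hsplit, map_sub] at this
      linarith
    -- choose local extensions
    choose U hUo hxU E hEsm hEagree using fun f : Csm n S => f.2 x
    refine ⟨{ toFun := fun f => w ⟨E f, hEsm f⟩
              map_add' := ?_
              map_smul' := ?_ }, ?_, ?_⟩
    · intro f g
      have h1 : w ⟨E (f + g), hEsm (f + g)⟩ = w ⟨E f + E g, (hEsm f).add (hEsm g)⟩ := by
        refine key _ _ _ _ (U (f + g) ∩ (U f ∩ U g))
          ((hUo _).inter ((hUo _).inter (hUo _))) ⟨hxU _, hxU _, hxU _⟩ ?_
        intro y hy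
        have e1 := hEagree (f + g) y hy.1
        have e2 := hEagree f y hy.2.1
        have e3 := hEagree g y hy.2.2
        have : ((f + g : Csm n S) : S → ℝ) y = f.1 y + g.1 y := rfl
        rw [this] at e1
        simp [Pi.add_apply, ← e1, e2, e3]
      rw [h1]
      have : (⟨E f + E g, (hEsm f).add (hEsm g)⟩ : CsmAll n) = ⟨E f, hEsm f⟩ + ⟨E g, hEsm g⟩ := rfl
      rw [this, map_add]
    · intro r f
      have h1 : w ⟨E (r • f), hEsm (r • f)⟩ = w ⟨r • E f, (hEsm f).const_smul r⟩ := by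
        refine key _ _ _ _ (U (r • f) ∩ U f) ((hUo _).inter (hUo _)) ⟨hxU _, hxU _⟩ ?_
        intro y hy
        have e1 := hEagree (r • f) y hy.1
        have e2 := hEagree f y hy.2
        have : ((r • f : Csm n S) : S → ℝ) y = r • f.1 y := rfl
        rw [this] at e1
        simp [Pi.smul_apply, ← e1, e2]
      rw [h1]
      have : (⟨r • E f, (hEsm f).const_smul r⟩ : CsmAll n) = r • ⟨E f, hEsm f⟩ := rfl
      rw [this, map_smul]
      rfl
    · intro f g
      have h1 : w ⟨E (f * g), hEsm (f * g)⟩ = w ⟨E f * E g, (hEsm f).mul (hEsm g)⟩ := by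
        refine key _ _ _ _ (U (f * g) ∩ (U f ∩ U g))
          ((hUo _).inter ((hUo _).inter (hUo _))) ⟨hxU _, hxU _, hxU _⟩ ?_
        intro y hy
        have e1 := hEagree (f * g) y hy.1
        have e2 := hEagree f y hy.2.1
        have e3 := hEagree g y hy.2.2
        have : ((f * g : Csm n S) : S → ℝ) y = f.1 y * g.1 y := rfl
        rw [this] at e1
        simp [Pi.mul_apply, ← e1, e2, e3]
      have hmul : (⟨E f, hEsm f⟩ * ⟨E g, hEsm g⟩ : CsmAll n) =
          ⟨E f * E g, (hEsm f).mul (hEsm g)⟩ := rfl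
      have hleib := hw ⟨E f, hEsm f⟩ ⟨E g, hEsm g⟩
      rw [hmul] at hleib
      simp only [LinearMap.coe_mk, AddHom.coe_mk]
      rw [h1, hleib]
      have ef : (E f) (x : Fin n → ℝ) = (f : S → ℝ) x := (hEagree f x (hxU f)).symm
      have eg : (E g) (x : Fin n → ℝ) = (g : S → ℝ) x := (hEagree g x (hxU g)).symm
      rw [show ((⟨E f, hEsm f⟩ : CsmAll n) : (Fin n → ℝ) → ℝ) (x : Fin n → ℝ) = E f x from rfl,
        show ((⟨E g, hEsm g⟩ : CsmAll n) : (Fin n → ℝ) → ℝ) (x : Fin n → ℝ) = E g x from rfl,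
        ef, eg]
    · intro F hF
      simp only [LinearMap.coe_mk, AddHom.coe_mk]
      set f : Csm n S := ⟨fun y : S => F y, restrict_mem_Csm S hF⟩
      refine key _ _ _ _ (U f) (hUo f) (hxU f) ?_
      intro y hy
      exact (hEagree f y hy).symm
end
end

section
/- Let S be a subset of ℝⁿ, x ∈ S, and let v be a point derivation of C^∞(S) at x. Let f ∈ C^∞(S), and suppose U is an open neighbourhood of x in ℝⁿ and F : ℝⁿ → ℝ is smooth with f(y) = F(y) for all y ∈ U ∩ S. Then v(f) = Σ_{i=1}^{n} (∂F/∂x_i)(x) · v(q_i), where q_i ∈ C^∞(S) is the restriction to S of the i-th coordinate function on ℝⁿ. -/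
noncomputable section

section AuxLemmas

set_option synthInstance.maxHeartbeats 1000000
open MeasureTheory Metric intervalIntegral ContDiff

variable {E : Type} [NormedAddCommGroup E] [NormedSpace ℝ E] [FiniteDimensional ℝ E]

theorem contDiff_param_integral :
    ∀ (m : ℕ) {F : Type} [NormedAddCommGroup F] [NormedSpace ℝ F] [FiniteDimensional ℝ F] (k : ℝ × E → F),
      ContDiff ℝ (⊤ : ℕ∞) k →
      ContDiff ℝ m (fun y : E => ∫ t in (0:ℝ)..1, k (t, y)) := by
  intro m
  induction m with
  | zero =>
    intro F _ _ _ k hk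
    rw [Nat.cast_zero, contDiff_zero]
    exact continuous_parametric_intervalIntegral_of_continuous'
      (f := fun y t => k (t, y)) (μ := volume)
      (hk.continuous.comp (continuous_snd.prodMk continuous_fst)) 0 1
  | succ m ih =>
    intro F _ _ _ k hk
    set A : ℝ × E → E →L[ℝ] F := fun p => (fderiv ℝ k p).comp (ContinuousLinearMap.inr ℝ ℝ E) with hA_def
    have hA : ContDiff ℝ (⊤ : ℕ∞) A := by
      apply (ContinuousLinearMap.compL ℝ E (ℝ × E) F).flip
        ((ContinuousLinearMap.inr ℝ ℝ E)) |>.contDiff.comp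
      exact hk.fderiv_right (by exact_mod_cast le_top)
    have hdiff : ∀ y₀ : E, HasFDerivAt (fun y : E => ∫ t in (0:ℝ)..1, k (t, y))
        (∫ t in (0:ℝ)..1, A (t, y₀)) y₀ := by
      intro y₀
      obtain ⟨C, hC⟩ : ∃ C, ∀ p ∈ (Set.uIcc (0:ℝ) 1) ×ˢ closedBall y₀ 1, ‖A p‖ ≤ C :=
        ((isCompact_uIcc.prod (isCompact_closedBall y₀ 1)).exists_bound_of_continuousOn
          hA.continuous.continuousOn)
      apply intervalIntegral.hasFDerivAt_integral_of_dominated_of_fderiv_le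
        (F := fun y t => k (t, y)) (F' := fun y t => A (t, y)) (bound := fun _ => C)
        (μ := volume) (s := ball y₀ 1) (ball_mem_nhds y₀ one_pos)
      · filter_upwards with x
        exact (hk.continuous.comp (Continuous.prodMk_left x)).aestronglyMeasurable
      · exact (hk.continuous.comp (Continuous.prodMk_left y₀)).intervalIntegrable 0 1
      · exact (hA.continuous.comp (Continuous.prodMk_left y₀)).aestronglyMeasurable
      · filter_upwards with t ht x hx
        exact hC (t, x) ⟨Set.Ioc_subset_Icc_self ht, ball_subset_closedBall hx⟩
      · exact intervalIntegrable_const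
      · filter_upwards with t ht x hx
        exact ((hk.differentiable (by simp) (t, x)).hasFDerivAt).comp x
          (hasFDerivAt_prodMk_right t x)
    have hfd : fderiv ℝ (fun y : E => ∫ t in (0:ℝ)..1, k (t, y))
        = fun y₀ => ∫ t in (0:ℝ)..1, A (t, y₀) := funext fun y₀ => (hdiff y₀).fderiv
    have : ((m + 1 : ℕ) : WithTop ℕ∞) = (m : WithTop ℕ∞) + 1 := by push_cast; ring
    rw [this, contDiff_succ_iff_fderiv]
    refine ⟨fun y₀ => (hdiff y₀).differentiableAt, by simp, ?_⟩
    rw [hfd]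
    exact ih (F := E →L[ℝ] F) A hA

theorem hadamard {n : ℕ} {F : (Fin n → ℝ) → ℝ} (hF : ContDiff ℝ (⊤ : ℕ∞) F)
    (x : Fin n → ℝ) :
    ∃ H : Fin n → (Fin n → ℝ) → ℝ,
      (∀ i, ContDiff ℝ (⊤ : ℕ∞) (H i)) ∧
      (∀ i, H i x = fderiv ℝ F x (Pi.single i 1)) ∧
      (∀ y, F y = F x + ∑ i, (y i - x i) * H i y) := by
  have hline : ContDiff ℝ (⊤ : ℕ∞) (fun p : ℝ × (Fin n → ℝ) => x + p.1 • (p.2 - x)) :=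
    contDiff_const.add (contDiff_fst.smul (contDiff_snd.sub contDiff_const))
  have hDF : ContDiff ℝ (⊤ : ℕ∞) (fun z => fderiv ℝ F z) :=
    hF.fderiv_right (by exact_mod_cast le_top)
  set k : Fin n → ℝ × (Fin n → ℝ) → ℝ :=
    fun i p => fderiv ℝ F (x + p.1 • (p.2 - x)) (Pi.single i 1) with hk_def
  have hk : ∀ i, ContDiff ℝ (⊤ : ℕ∞) (k i) := fun i =>
    (hDF.comp hline).clm_apply contDiff_const
  refine ⟨fun i y => ∫ t in (0:ℝ)..1, k i (t, y), fun i => ?_, fun i => ?_, fun y => ?_⟩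
  · rw [show ((⊤ : ℕ∞) : WithTop ℕ∞) = ∞ from rfl, contDiff_infty]
    exact fun m => contDiff_param_integral m (k i) (hk i)
  · show (∫ t in (0:ℝ)..1, k i (t, x)) = fderiv ℝ F x (Pi.single i 1)
    simp [hk_def, intervalIntegral.integral_const]
  · -- the fundamental theorem of calculus along the segment
    have hc : ∀ t : ℝ, HasDerivAt (fun t : ℝ => x + t • (y - x)) (y - x) t := by
      intro t
      simpa using ((hasDerivAt_id t).smul_const (y - x)).const_add x
    have hφ : ∀ t ∈ Set.uIcc (0:ℝ) 1, HasDerivAt (fun t : ℝ => F (x + t • (y - x)))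
        (fderiv ℝ F (x + t • (y - x)) (y - x)) t := fun t _ =>
      ((hF.differentiable (by simp) _).hasFDerivAt).comp_hasDerivAt t (hc t)
    have hint : ∀ i, IntervalIntegrable (fun t => k i (t, y)) MeasureTheory.volume 0 1 :=
      fun i => ((hk i).continuous.comp (Continuous.prodMk_left y)).intervalIntegrable 0 1
    have key : F y - F x = ∫ t in (0:ℝ)..1, fderiv ℝ F (x + t • (y - x)) (y - x) := by
      have hcont : Continuous fun t : ℝ => fderiv ℝ F (x + t • (y - x)) (y - x) :=
        ((hDF.comp (contDiff_const.add (contDiff_id.smul contDiff_const))).clm_apply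
          contDiff_const).continuous
      have := intervalIntegral.integral_eq_sub_of_hasDerivAt hφ (hcont.intervalIntegrable 0 1)
      simpa using this.symm
    have hyx : (y - x) = ∑ i, (y i - x i) • (Pi.single i 1 : Fin n → ℝ) := by
      ext j
      simp [Pi.single_apply]
    have expand : ∀ z, fderiv ℝ F z (y - x) = ∑ i, (y i - x i) * fderiv ℝ F z (Pi.single i 1) := by
      intro z
      rw [hyx, map_sum]
      simp [smul_eq_mul]
    have step1 : (∫ t in (0:ℝ)..1, fderiv ℝ F (x + t • (y - x)) (y - x))
        = ∑ i, (y i - x i) * ∫ t in (0:ℝ)..1, k i (t, y) := by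
      rw [intervalIntegral.integral_congr (g := fun t => ∑ i, (y i - x i) * k i (t, y))
        (fun t _ => expand _)]
      rw [intervalIntegral.integral_finset_sum (fun i _ => (hint i).const_mul _)]
      exact Finset.sum_congr rfl fun i _ => intervalIntegral.integral_const_mul _ _
    have := key
    rw [step1] at this
    linarith [this]


theorem ptDeriv_const {n : ℕ} {S : Set (Fin n → ℝ)} (x : S)
    (v : Csm n S →ₗ[ℝ] ℝ) (hv : IsPtDeriv (Csm n S) x v) (r : ℝ) :
    v (algebraMap ℝ (Csm n S) r) = 0 := by
  have h1 : v 1 = 0 := by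
    have := hv 1 1
    simp at this
    linarith
  rw [Algebra.algebraMap_eq_smul_one, LinearMap.map_smul, h1, smul_eq_mul, mul_zero]

theorem ptDeriv_loc_s3 {n : ℕ} {S : Set (Fin n → ℝ)} (x : S)
    (v : Csm n S →ₗ[ℝ] ℝ) (hv : IsPtDeriv (Csm n S) x v)
    (g : Csm n S) (U : Set (Fin n → ℝ)) (hU : IsOpen U) (hxU : (x : Fin n → ℝ) ∈ U)
    (hzero : ∀ y : S, (y : Fin n → ℝ) ∈ U → (g : S → ℝ) y = 0) : v g = 0 := by
  obtain ⟨ε, εpos, hball⟩ := Metric.isOpen_iff.mp hU x hxU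
  set φ : ContDiffBump (x : Fin n → ℝ) := ⟨ε/2, ε, by positivity, by linarith⟩
  have hφs : ContDiff ℝ (⊤ : ℕ∞) (φ : (Fin n → ℝ) → ℝ) := φ.contDiff
  set ψ : Csm n S := ⟨fun y : S => 1 - φ y, restrict_mem_Csm S (contDiff_const.sub hφs)⟩
  have hgψ : g = g * ψ := by
    apply Subtype.ext; funext y
    show (g : S → ℝ) y = (g : S → ℝ) y * (1 - φ (y : Fin n → ℝ))
    by_cases hy : φ (y : Fin n → ℝ) = 0
    · rw [hy]; ring
    · have hyU : (y : Fin n → ℝ) ∈ U := hball (φ.support_eq ▸ Function.mem_support.2 hy)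
      rw [hzero y hyU]; ring
  have hψx : (ψ : S → ℝ) x = 0 := by
    show 1 - φ (x : Fin n → ℝ) = 0
    rw [φ.one_of_mem_closedBall (Metric.mem_closedBall_self (by positivity))]
    ring
  have h := hv g ψ
  rw [← hgψ, hψx, hzero x hxU] at h
  simpa using h

end AuxLemmas

/-- If `f ∈ C^∞(S)` agrees on `U ∩ S` with a smooth function `F` on `ℝⁿ`,
where `U` is an open neighbourhood of `x`, then for any point derivation `v` of `C^∞(S)`
at `x` we have `v f = ∑ i, (∂F/∂xᵢ)(x) ⬝ v qᵢ`. -/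
theorem ptDeriv_eq_sum_partials {n : ℕ} (S : Set (Fin n → ℝ)) (x : S)
    (v : Csm n S →ₗ[ℝ] ℝ) (hv : IsPtDeriv (Csm n S) x v)
    (f : S → ℝ) (hf : f ∈ Csm n S)
    (U : Set (Fin n → ℝ)) (hU : IsOpen U) (hxU : (x : Fin n → ℝ) ∈ U)
    (F : (Fin n → ℝ) → ℝ) (hF : ContDiff ℝ (⊤ : ℕ∞) F)
    (hloc : ∀ y : S, (y : Fin n → ℝ) ∈ U → f y = F y) :
    v ⟨f, hf⟩ = ∑ i : Fin n, fderiv ℝ F (x : Fin n → ℝ) (Pi.single i 1) * v (coordFn n S i) := by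
  obtain ⟨H, hHsm, hHx, hHeq⟩ := hadamard hF (x : Fin n → ℝ)
  set Fs : Csm n S := ⟨fun y : S => F y, restrict_mem_Csm S hF⟩ with hFs
  set Hs : Fin n → Csm n S := fun i => ⟨fun y : S => H i y, restrict_mem_Csm S (hHsm i)⟩ with hHs
  have h1 : v ⟨f, hf⟩ = v Fs := by
    have hdiff0 : v (⟨f, hf⟩ - Fs) = 0 := by
      apply ptDeriv_loc_s3 x v hv _ U hU hxU
      intro y hy
      show f y - F (y : Fin n → ℝ) = 0
      rw [hloc y hy]; ring
    have h := map_sub v ⟨f, hf⟩ Fs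
    rw [hdiff0] at h
    linarith
  have hX : Fs = algebraMap ℝ (Csm n S) (F (x : Fin n → ℝ)) +
      ∑ i, (coordFn n S i - algebraMap ℝ (Csm n S) ((x : Fin n → ℝ) i)) * Hs i := by
    apply Subtype.ext; funext y
    have hy := hHeq (y : Fin n → ℝ)
    simp [hHs, coordFn, Algebra.algebraMap_eq_smul_one]
    convert hy using 2
  rw [h1, hX, map_add, map_sum, ptDeriv_const x v hv, zero_add]
  refine Finset.sum_congr rfl fun i _ => ?_
  have hterm := hv (coordFn n S i - algebraMap ℝ (Csm n S) ((x : Fin n → ℝ) i)) (Hs i)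
  have hc0 : ((coordFn n S i - algebraMap ℝ (Csm n S) ((x : Fin n → ℝ) i) : Csm n S) : S → ℝ) x = 0 := by
    show (x : Fin n → ℝ) i - (x : Fin n → ℝ) i = 0
    ring
  have hHsx : ((Hs i : Csm n S) : S → ℝ) x = fderiv ℝ F (x : Fin n → ℝ) (Pi.single i 1) := by
    show H i (x : Fin n → ℝ) = _
    exact hHx i
  rw [hterm, hc0, hHsx, map_sub, ptDeriv_const x v hv]
  ring
end
end

section
/- Let S be a subset of ℝⁿ, let V be a nonempty open subset of S (subspace topology), and let N be the maximum of the structural dimensions n_y over y ∈ V (this maximum exists since n_y ≤ n for all y). If every nonempty open subset of V contains a point z with n_z = N, then n_y = N for every y ∈ V; in particular every point of V is structurally regular. -/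
noncomputable section

/-- The identity is a smooth map of subsets. -/
theorem smoothMapSub_id {n : ℕ} (A : Set (Fin n → ℝ)) : SmoothMapSub n n A A id :=
  fun _ => ⟨Set.univ, isOpen_univ, trivial, id, contDiff_id, fun _ _ => rfl⟩

/-- The defining set of `structDimAt` is nonempty: `n` always belongs to it. -/
theorem structDim_set_nonempty {n : ℕ} (S : Set (Fin n → ℝ)) {x : Fin n → ℝ} (hx : x ∈ S) :
    {m | ∃ U : Set (Fin n → ℝ), x ∈ U ∧ (∃ W, IsOpen W ∧ U = W ∩ S) ∧
      ∃ V : Set (Fin m → ℝ), DiffeoSubsets n m U V}.Nonempty :=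
  ⟨n, Set.univ ∩ S, ⟨trivial, hx⟩, ⟨Set.univ, isOpen_univ, rfl⟩,
    Set.univ ∩ S, id, id, smoothMapSub_id _, smoothMapSub_id _, fun _ => rfl, fun _ => rfl⟩

/-- Upper semicontinuity of the structural dimension. -/
theorem structDim_le_on_nbhd {n : ℕ} (S : Set (Fin n → ℝ)) {x : Fin n → ℝ} (hx : x ∈ S) :
    ∃ W, IsOpen W ∧ x ∈ W ∧ ∀ z ∈ W ∩ S, structDimAt n S z ≤ structDimAt n S x := by
  obtain ⟨U, hxU, ⟨W, hW, hUW⟩, V', hdiff⟩ := Nat.sInf_mem (structDim_set_nonempty S hx)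
  refine ⟨W, hW, by rw [hUW] at hxU; exact hxU.1, fun z hz => ?_⟩
  exact Nat.sInf_le ⟨U, hUW ▸ hz, ⟨W, hW, hUW⟩, V', hdiff⟩

/-- Let `V` be a nonempty open subset of `S` and let `N` be the maximum
of the structural dimensions at points of `V`. If every nonempty open subset of `V`
contains a point of structural dimension `N`, then the structural dimension is `N`
everywhere on `V`; in particular every point of `V` is structurally regular. -/
theorem structDim_const_of_maxDim_dense {n : ℕ} (S : Set (Fin n → ℝ))
    (V : Set (Fin n → ℝ)) (hVS : V ⊆ S) (hne : V.Nonempty)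
    (hVopen : ∃ W, IsOpen W ∧ V = W ∩ S) (N : ℕ)
    (hub : ∀ y ∈ V, structDimAt n S y ≤ N) (hmax : ∃ y ∈ V, structDimAt n S y = N)
    (hdense : ∀ O : Set (Fin n → ℝ), O ⊆ V → O.Nonempty →
      (∃ W, IsOpen W ∧ O = W ∩ V) → ∃ z ∈ O, structDimAt n S z = N) :
    (∀ y ∈ V, structDimAt n S y = N) ∧ ∀ y ∈ V, StructRegular n S y := by
  have key : ∀ y ∈ V, structDimAt n S y = N := by
    intro y hy
    obtain ⟨W, hW, hyW, hle⟩ := structDim_le_on_nbhd S (hVS hy)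
    obtain ⟨z, hz, hzN⟩ := hdense (W ∩ V) Set.inter_subset_right ⟨y, hyW, hy⟩ ⟨W, hW, rfl⟩
    have h1 : structDimAt n S z ≤ structDimAt n S y := hle z ⟨hz.1, hVS hz.2⟩
    exact le_antisymm (hub y hy) (hzN ▸ h1)
  refine ⟨key, fun y hy => ?_⟩
  obtain ⟨W, hW, hVW⟩ := hVopen
  refine ⟨W, hW, (hVW ▸ hy).1, fun z hz => ?_⟩
  rw [key z (hVW ▸ hz), key y hy]
end
end

section
/- Let S be a subset of ℝⁿ. Then the set S_reg of structurally regular points of S is open and dense in S with the subspace topology. -/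
noncomputable section

/-- Upper semicontinuity of the structural dimension. -/
theorem structDim_usc {n : ℕ} (S : Set (Fin n → ℝ)) {x : Fin n → ℝ} (hx : x ∈ S) :
    ∃ W : Set (Fin n → ℝ), IsOpen W ∧ x ∈ W ∧
      ∀ y ∈ W ∩ S, structDimAt n S y ≤ structDimAt n S x := by
  have hmem := Nat.sInf_mem (structDim_set_nonempty S hx)
  obtain ⟨U, hxU, ⟨W, hW, hUW⟩, V, hdiff⟩ := hmem
  refine ⟨W, hW, (hUW ▸ hxU).1, fun y hy => ?_⟩
  exact Nat.sInf_le ⟨U, hUW ▸ hy, ⟨W, hW, hUW⟩, V, hdiff⟩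

/-- The set of structurally regular points of `S` is open and dense in
`S` with the subspace topology. -/
theorem structRegular_open_dense {n : ℕ} (S : Set (Fin n → ℝ)) :
    IsOpen {y : S | StructRegular n S ↑y} ∧ Dense {y : S | StructRegular n S ↑y} := by
  constructor
  · -- openness
    rw [isOpen_iff_forall_mem_open]
    rintro ⟨y, hyS⟩ ⟨W, hW, hyW, hconst⟩
    refine ⟨Subtype.val ⁻¹' W, ?_, (hW.preimage continuous_subtype_val), hyW⟩
    rintro ⟨z, hzS⟩ hzW
    refine ⟨W, hW, hzW, fun w hw => ?_⟩
    rw [hconst w hw, hconst z ⟨hzW, hzS⟩]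
  · -- density
    rw [dense_iff_inter_open]
    rintro O hO ⟨⟨z, hzS⟩, hzO⟩
    -- minimise structDimAt over O
    set K : Set ℕ := {k | ∃ y : S, y ∈ O ∧ structDimAt n S ↑y = k} with hK
    have hKne : K.Nonempty := ⟨_, ⟨z, hzS⟩, hzO, rfl⟩
    obtain ⟨y, hyO, hym⟩ := Nat.sInf_mem hKne
    obtain ⟨W', hW', hyW', husc⟩ := structDim_usc S y.2
    -- O is open in subtype topology: pull back to ambient open set
    obtain ⟨WO, hWO, hOW⟩ := isOpen_induced_iff.mp hO
    refine ⟨y, hyO, ?_⟩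
    refine ⟨W' ∩ WO, hW'.inter hWO, ⟨hyW', by rw [← hOW] at hyO; exact hyO⟩, ?_⟩
    rintro w ⟨⟨hwW', hwWO⟩, hwS⟩
    have h1 : structDimAt n S w ≤ structDimAt n S ↑y := husc w ⟨hwW', hwS⟩
    have h2 : sInf K ≤ structDimAt n S w := by
      apply Nat.sInf_le
      refine ⟨⟨w, hwS⟩, ?_, rfl⟩
      rw [← hOW]; exact hwWO
    omega
end
end

section
/- Let V be a subset of ℝⁿ such that the structural dimension of V at every point equals n (the ambient dimension). Then every smooth function F : ℝⁿ → ℝ that vanishes identically on V has vanishing gradient at every point of V: (∂F/∂x_i)(y) = 0 for all y ∈ V and i = 1, …, n. -/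
noncomputable section

open Set Metric in
/-- deletion of the `i`-th coordinate is smooth -/
private lemma contDiff_del {k : ℕ} (i : Fin (k+1)) :
    ContDiff ℝ (⊤ : ℕ∞) (fun z : Fin (k+1) → ℝ => fun j : Fin k => z (i.succAbove j)) :=
  contDiff_pi.2 fun j => contDiff_pi.1 contDiff_id (i.succAbove j)

open Set Metric in
/-- insertion of `0` at the `i`-th coordinate is smooth -/
private lemma contDiff_ins {k : ℕ} (i : Fin (k+1)) :
    ContDiff ℝ (⊤ : ℕ∞) (fun z : Fin k → ℝ => (i.insertNth (0:ℝ) z : Fin (k+1) → ℝ)) := by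
  refine (contDiff_pi (F' := fun _ : Fin (k+1) => ℝ)).mpr fun l => ?_
  refine Fin.succAboveCases
    (α := fun l => ContDiff ℝ (⊤:ℕ∞) fun z : Fin k → ℝ => (i.insertNth (0:ℝ) z : Fin (k+1) → ℝ) l)
    i ?_ (fun j => ?_) l
  · simpa [Fin.insertNth_apply_same] using
      (contDiff_const : ContDiff ℝ (⊤:ℕ∞) fun _ : Fin k → ℝ => (0:ℝ))
  · simpa [Fin.insertNth_apply_succAbove] using contDiff_pi.1 contDiff_id j

open Set Metric in
/-- local smooth extension via a bump function -/
private lemma exists_smooth_ext {k m : ℕ} {f : (Fin k → ℝ) → (Fin m → ℝ)} {U : Set (Fin k → ℝ)}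
    (hU : IsOpen U) (hf : ContDiffOn ℝ (⊤:ℕ∞) f U) {b : Fin k → ℝ} (hb : b ∈ U) :
    ∃ G : (Fin k → ℝ) → (Fin m → ℝ), ContDiff ℝ (⊤:ℕ∞) G ∧
      ∃ O : Set (Fin k → ℝ), IsOpen O ∧ b ∈ O ∧ ∀ z ∈ O, G z = f z := by
  obtain ⟨r, hr, hball⟩ := Metric.isOpen_iff.1 hU b hb
  set c : ContDiffBump b := ⟨r/4, r/2, by positivity, by linarith⟩ with hc
  refine ⟨fun z => c z • f z, ?_, ball b (r/4), isOpen_ball, mem_ball_self (by positivity), ?_⟩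
  · rw [contDiff_iff_contDiffAt]
    intro z
    by_cases hz : z ∈ ball b r
    · exact (c.contDiff.contDiffAt).smul (hf.contDiffAt (hU.mem_nhds (hball hz)))
    · have hz' : z ∈ (closedBall b (r/2))ᶜ := by
        simp only [mem_compl_iff, mem_closedBall, not_le] at *
        simp only [mem_ball, not_lt] at hz
        linarith
      refine contDiffAt_const (c := 0) |>.congr_of_eventuallyEq ?_
      filter_upwards [isOpen_compl_iff.2 isClosed_closedBall |>.mem_nhds hz'] with w hw
      have : c w = 0 := by
        have := c.support_eq
        by_contra h
        have hw2 : w ∈ Function.support c := h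
        rw [this] at hw2
        exact hw (ball_subset_closedBall hw2)
      simp [this]
  · intro z hz
    have : c z = 1 := c.one_of_mem_closedBall
      (show dist z b ≤ r/4 from (mem_ball.1 hz).le)
    simp [this]

private def Lmap {k : ℕ} (i : Fin (k+1)) : (Fin (k+1) → ℝ) →L[ℝ] (Fin (k+1) → ℝ) :=
  ContinuousLinearMap.id ℝ _ - (ContinuousLinearMap.proj i).smulRight (Pi.single i 1)

private def Amap {k : ℕ} (i : Fin (k+1)) (F : (Fin (k+1) → ℝ) → ℝ) (x : Fin (k+1) → ℝ) :
    (Fin (k+1) → ℝ) →L[ℝ] (Fin (k+1) → ℝ) :=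
  Lmap i + (fderiv ℝ F x).smulRight (Pi.single i 1)

private lemma Amap_apply {k : ℕ} (i : Fin (k+1)) (F : (Fin (k+1) → ℝ) → ℝ)
    (x v : Fin (k+1) → ℝ) (j : Fin (k+1)) :
    Amap i F x v j = if j = i then fderiv ℝ F x v else v j := by
  simp only [Amap, Lmap, ContinuousLinearMap.add_apply, ContinuousLinearMap.sub_apply,
    ContinuousLinearMap.id_apply, ContinuousLinearMap.smulRight_apply,
    ContinuousLinearMap.proj_apply, Pi.add_apply, Pi.sub_apply, Pi.smul_apply,
    Pi.single_apply, smul_eq_mul]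
  by_cases h : j = i <;> simp [h]

private lemma hasFDerivAt_Phi {k : ℕ} (i : Fin (k+1)) {F : (Fin (k+1) → ℝ) → ℝ}
    (hF : ContDiff ℝ (⊤:ℕ∞) F) (x : Fin (k+1) → ℝ) :
    HasFDerivAt (fun x => Function.update x i (F x)) (Amap i F x) x := by
  have h1 : (fun x : Fin (k+1) → ℝ => Function.update x i (F x))
      = fun x => Lmap i x + F x • (Pi.single i 1 : Fin (k+1) → ℝ) := by
    funext x
    funext j
    simp only [Lmap, ContinuousLinearMap.sub_apply, ContinuousLinearMap.id_apply,
      ContinuousLinearMap.smulRight_apply, ContinuousLinearMap.proj_apply, Pi.add_apply,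
      Pi.sub_apply, Pi.smul_apply, Pi.single_apply, smul_eq_mul, Function.update_apply]
    by_cases h : j = i <;> simp [h]
  rw [h1]
  exact ((Lmap i).hasFDerivAt).add
    (((hF.differentiable (by simp) x).hasFDerivAt).smul_const (Pi.single i 1))

private lemma Amap_ker {k : ℕ} (i : Fin (k+1)) {F : (Fin (k+1) → ℝ) → ℝ} {x : Fin (k+1) → ℝ}
    (hc : fderiv ℝ F x (Pi.single i 1) ≠ 0) : LinearMap.ker (Amap i F x : (Fin (k+1) → ℝ) →ₗ[ℝ] (Fin (k+1) → ℝ)) = ⊥ := by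
  rw [LinearMap.ker_eq_bot']
  intro v h
  have happ : ∀ j, Amap i F x v j = 0 := fun j => congrFun h j
  have hne : ∀ j, j ≠ i → v j = 0 := by
    intro j hj
    have := happ j
    rwa [Amap_apply, if_neg hj] at this
  have hvw : v = (v i) • (Pi.single i 1 : Fin (k+1) → ℝ) := by
    funext j
    by_cases h' : j = i
    · subst h'; simp
    · simp [Pi.single_apply, h', hne j h']
  have hd : fderiv ℝ F x v = 0 := by
    have := happ i
    rwa [Amap_apply, if_pos rfl] at this
  rw [hvw, map_smul, smul_eq_mul] at hd
  have hvi : v i = 0 := by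
    rcases mul_eq_zero.1 hd with h' | h'
    · exact h'
    · exact absurd h' hc
  rw [hvw, hvi, zero_smul]

private def Aequiv {k : ℕ} (i : Fin (k+1)) (F : (Fin (k+1) → ℝ) → ℝ) (x : Fin (k+1) → ℝ)
    (hc : fderiv ℝ F x (Pi.single i 1) ≠ 0) : (Fin (k+1) → ℝ) ≃L[ℝ] (Fin (k+1) → ℝ) :=
  ContinuousLinearEquiv.ofBijective (Amap i F x) (Amap_ker i hc)
    (LinearMap.range_eq_top.2 (LinearMap.injective_iff_surjective.1
      (LinearMap.ker_eq_bot.1 (Amap_ker i hc))))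

private lemma Aequiv_coe {k : ℕ} (i : Fin (k+1)) (F : (Fin (k+1) → ℝ) → ℝ) (x : Fin (k+1) → ℝ)
    (hc : fderiv ℝ F x (Pi.single i 1) ≠ 0) :
    (Aequiv i F x hc : (Fin (k+1) → ℝ) →L[ℝ] (Fin (k+1) → ℝ)) = Amap i F x :=
  ContinuousLinearEquiv.coe_ofBijective _ _ _

open Set Metric in
private lemma aux_key {k : ℕ} (V : Set (Fin (k+1) → ℝ)) {F : (Fin (k+1) → ℝ) → ℝ}
    (hF : ContDiff ℝ (⊤:ℕ∞) F) (hvan : ∀ y ∈ V, F y = 0)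
    {y : Fin (k+1) → ℝ} (hy : y ∈ V) {i : Fin (k+1)}
    (hc : fderiv ℝ F y (Pi.single i 1) ≠ 0) :
    ∃ W : Set (Fin (k+1) → ℝ), IsOpen W ∧ y ∈ W ∧
      ∃ V' : Set (Fin k → ℝ), DiffeoSubsets (k+1) k (W ∩ V) V' := by
  classical
  set Φ : (Fin (k+1) → ℝ) → (Fin (k+1) → ℝ) := fun x => Function.update x i (F x) with hΦdef
  have hΦ : ContDiff ℝ (⊤:ℕ∞) Φ := by
    refine contDiff_pi.mpr fun j => ?_
    rcases eq_or_ne j i with rfl | h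
    · have : (fun x : Fin (k+1) → ℝ => Φ x j) = F := by
        funext x; simp [hΦdef]
      rw [this]; exact hF
    · have : (fun x : Fin (k+1) → ℝ => Φ x j) = fun x => x j := by
        funext x; simp [hΦdef, Function.update_apply, h]
      rw [this]; exact contDiff_pi.1 contDiff_id j
  have hA : ∀ x, HasFDerivAt Φ (Amap i F x) x := fun x => hasFDerivAt_Phi i hF x
  have h1T : ((⊤:ℕ∞) : WithTop ℕ∞) ≠ 0 := by simp
  have hfd : HasFDerivAt Φ ((Aequiv i F y hc : (Fin (k+1) → ℝ) →L[ℝ] (Fin (k+1) → ℝ))) y := by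
    rw [Aequiv_coe]; exact hA y
  set e := (hΦ.contDiffAt).toOpenPartialHomeomorph Φ hfd h1T with he
  have hecoe : ∀ z, e z = Φ z := fun z => rfl
  have hysrc : y ∈ e.source := (hΦ.contDiffAt).mem_toOpenPartialHomeomorph_source hfd h1T
  have hcont : Continuous fun x => fderiv ℝ F x (Pi.single i 1) :=
    (hF.continuous_fderiv h1T).clm_apply continuous_const
  set W := e.source ∩ {x | fderiv ℝ F x (Pi.single i 1) ≠ 0} with hW
  have hWopen : IsOpen W :=
    e.open_source.inter (isOpen_compl_singleton.preimage hcont)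
  have hyW : y ∈ W := ⟨hysrc, hc⟩
  set U : Set (Fin (k+1) → ℝ) := W ∩ V with hU
  set del : (Fin (k+1) → ℝ) → (Fin k → ℝ) := fun z j => z (i.succAbove j) with hdel
  set ι : (Fin k → ℝ) → (Fin (k+1) → ℝ) := fun z => (i.insertNth (0:ℝ) z : Fin (k+1) → ℝ)
    with hι
  have hιΦ : ∀ x ∈ V, ι (del x) = Φ x := by
    intro x hx
    funext l
    refine Fin.succAboveCases (α := fun l => ι (del x) l = Φ x l) i ?_ (fun j => ?_) l
    · simp [hι, hdel, hΦdef, hvan x hx]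
    · simp [hι, hdel, hΦdef, Function.update_apply, (Fin.succAbove_ne i j)]
  set ψ₀ : (Fin k → ℝ) → (Fin (k+1) → ℝ) := fun z => e.symm (ι z) with hψ₀def
  have hψ₀ : ∀ x ∈ U, ψ₀ (del x) = x := by
    intro x hxU
    have hxV : x ∈ V := hxU.2
    have hxsrc : x ∈ e.source := hxU.1.1
    rw [hψ₀def]
    simp only
    rw [hιΦ x hxV, ← hecoe x]
    exact e.left_inv hxsrc
  set V' : Set (Fin k → ℝ) := del '' U with hV'
  refine ⟨W, hWopen, hyW, V', ?_⟩
  have hmemV' : ∀ x : U, del (x : Fin (k+1) → ℝ) ∈ V' := fun x => ⟨x, x.2, rfl⟩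
  set φ : U → V' := fun x => ⟨del (x : Fin (k+1) → ℝ), hmemV' x⟩ with hφ
  have hψmem : ∀ b : V', ψ₀ (b : Fin k → ℝ) ∈ U := by
    rintro ⟨b, x, hxU, rfl⟩
    rw [hψ₀ x hxU]; exact hxU
  set ψ : V' → U := fun b => ⟨ψ₀ (b : Fin k → ℝ), hψmem b⟩ with hψ
  refine ⟨φ, ψ, ?_, ?_, ?_, ?_⟩
  · -- smoothness of φ
    intro x
    exact ⟨Set.univ, isOpen_univ, trivial, del, contDiff_del i, fun _ _ => rfl⟩
  · -- smoothness of ψ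
    intro b
    obtain ⟨x, hxU, hxb⟩ := b.2
    have hT'open : IsOpen (e.target ∩ e.symm ⁻¹' W) := e.isOpen_inter_preimage_symm hWopen
    set U' : Set (Fin k → ℝ) := ι ⁻¹' (e.target ∩ e.symm ⁻¹' W) with hU'
    have hU'open : IsOpen U' := hT'open.preimage (contDiff_ins i).continuous
    have hbU' : del x ∈ U' := by
      have hxsrc : x ∈ e.source := hxU.1.1
      constructor
      · rw [hιΦ x hxU.2, ← hecoe x]; exact e.map_source hxsrc
      · show e.symm (ι (del x)) ∈ W
        rw [hιΦ x hxU.2, ← hecoe x, e.left_inv hxsrc]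
        exact hxU.1
    have hψ₀s : ContDiffOn ℝ (⊤:ℕ∞) ψ₀ U' := by
      intro z hz
      apply ContDiffAt.contDiffWithinAt
      have hz1 : ι z ∈ e.target := hz.1
      have hz2 : e.symm (ι z) ∈ W := hz.2
      have hfd' : HasFDerivAt (⇑e)
          ((Aequiv i F (e.symm (ι z)) hz2.2 : (Fin (k+1) → ℝ) →L[ℝ] (Fin (k+1) → ℝ)))
          (e.symm (ι z)) := by
        rw [Aequiv_coe]; exact hA (e.symm (ι z))
      have hsymm : ContDiffAt ℝ (⊤:ℕ∞) e.symm (ι z) :=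
        e.contDiffAt_symm hz1 hfd' (hΦ.contDiffAt)
      exact hsymm.comp z ((contDiff_ins i).contDiffAt)
    obtain ⟨G, hG, O, hO, hbO, hGψ⟩ := exists_smooth_ext hU'open hψ₀s hbU'
    refine ⟨O, hO, ?_, G, hG, fun b' hb' => ?_⟩
    · rw [← hxb] at *; exact hbO
    · show ψ₀ (b' : Fin k → ℝ) = G (b' : Fin k → ℝ)
      exact (hGψ _ hb').symm
  · -- left inverse
    intro x
    exact Subtype.ext (hψ₀ x x.2)
  · -- right inverse
    rintro ⟨b, x, hxU, hxb⟩
    apply Subtype.ext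
    show del (ψ₀ b) = b
    rw [← hxb, hψ₀ x hxU]

/-- If the structural dimension of `V ⊆ ℝⁿ` equals `n` at every point,
then every smooth function on `ℝⁿ` vanishing on `V` has vanishing gradient at every
point of `V`. -/
theorem gradient_vanishes_of_structDim_eq_ambient {n : ℕ} (V : Set (Fin n → ℝ))
    (hdim : ∀ y ∈ V, structDimAt n V y = n)
    (F : (Fin n → ℝ) → ℝ) (hF : ContDiff ℝ (⊤ : ℕ∞) F) (hvan : ∀ y ∈ V, F y = 0) :
    ∀ y ∈ V, ∀ i : Fin n, fderiv ℝ F y (Pi.single i 1) = 0 := by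
  intro y hy i
  by_contra hc
  obtain ⟨k, rfl⟩ : ∃ k, n = k + 1 := ⟨n - 1, (Nat.succ_pred_eq_of_pos i.pos).symm⟩
  obtain ⟨W, hWopen, hyW, V', hdiffeo⟩ := aux_key V hF hvan hy hc
  have hmem : k ∈ {m | ∃ U : Set (Fin (k+1) → ℝ), y ∈ U ∧ (∃ W, IsOpen W ∧ U = W ∩ V) ∧
      ∃ V : Set (Fin m → ℝ), DiffeoSubsets (k+1) m U V} :=
    ⟨W ∩ V, ⟨hyW, hy⟩, ⟨W, hWopen, rfl⟩, V', hdiffeo⟩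
  have hle : structDimAt (k+1) V y ≤ k := Nat.sInf_le hmem
  rw [hdim y hy] at hle
  omega
end
end
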